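/- arXiv:1201.5330 — 5 statements merged into one kernel-verified Lean document; each statement's English description precedes it below -/
import Mathlib

section
/- For any measurable set A ⊆ ℝ^d and any measurable function u : ℝ^d → ℝ that is essentially bounded on A, the essential oscillation of u over A equals the integral over s ∈ ℝ of the essential oscillation over A of the characteristic function of the superlevel set {u > s}. -/
open MeasureTheory Metric Set Filter

/-- The essential oscillation of `u` over `A`: `ess sup_A u - ess inf_A u`. -/
noncomputable def osc {d : ℕ} (A : Set (EuclideanSpace ℝ (Fin d)))
    (u : EuclideanSpace ℝ (Fin d) → ℝ) : ℝ :=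
  essSup u (volume.restrict A) - essInf u (volume.restrict A)

section Aux

variable {α : Type*} [MeasurableSpace α] {μ : MeasureTheory.Measure α}

lemma essSup_zero_measure (u : α → ℝ) : essSup u (0 : MeasureTheory.Measure α) = 0 := by
  rw [essSup_eq_sInf]
  have : {a : ℝ | (0 : MeasureTheory.Measure α) {x | a < u x} = 0} = univ := by
    ext a; simp
  rw [this]
  exact Real.sInf_of_not_bddBelow (by simpa using not_bddBelow_univ (α := ℝ))

lemma essInf_zero_measure (u : α → ℝ) : essInf u (0 : MeasureTheory.Measure α) = 0 := by
  rw [essInf_eq_sSup]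
  have : {a : ℝ | (0 : MeasureTheory.Measure α) {x | u x < a} = 0} = univ := by
    ext a; simp
  rw [this]
  exact Real.sSup_of_not_bddAbove (by simpa using not_bddAbove_univ (α := ℝ))

lemma essSup_eq_one {v : α → ℝ} (hle : ∀ x, v x ≤ 1) (h : μ {x | v x = 1} ≠ 0) :
    essSup v μ = 1 := by
  rw [essSup_eq_sInf]
  have hmem : (1 : ℝ) ∈ {a : ℝ | μ {x | a < v x} = 0} := by
    have he : {x | (1 : ℝ) < v x} = ∅ :=
      eq_empty_of_forall_notMem fun x hx => absurd (hle x) (not_le.2 hx)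
    simp [Set.mem_setOf_eq, he]
  have hlb : ∀ a ∈ {a : ℝ | μ {x | a < v x} = 0}, (1 : ℝ) ≤ a := by
    intro a ha
    by_contra hlt
    push_neg at hlt
    refine h (measure_mono_null ?_ ha)
    intro x hx
    simp only [Set.mem_setOf_eq] at *
    rw [hx]; exact hlt
  exact le_antisymm (csInf_le ⟨1, hlb⟩ hmem) (le_csInf ⟨1, hmem⟩ hlb)

lemma essInf_eq_zero {v : α → ℝ} (hge : ∀ x, 0 ≤ v x) (h : μ {x | v x = 0} ≠ 0) :
    essInf v μ = 0 := by
  rw [essInf_eq_sSup]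
  have hmem : (0 : ℝ) ∈ {a : ℝ | μ {x | v x < a} = 0} := by
    have he : {x | v x < (0 : ℝ)} = ∅ :=
      eq_empty_of_forall_notMem fun x hx => absurd (hge x) (not_le.2 hx)
    simp [Set.mem_setOf_eq, he]
  have hub : ∀ a ∈ {a : ℝ | μ {x | v x < a} = 0}, a ≤ (0 : ℝ) := by
    intro a ha
    by_contra hlt
    push_neg at hlt
    refine h (measure_mono_null ?_ ha)
    intro x hx
    simp only [Set.mem_setOf_eq] at *
    rw [hx]; exact hlt
  exact le_antisymm (csSup_le ⟨0, hmem⟩ hub) (le_csSup ⟨0, hub⟩ hmem)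

lemma essSup_le_of_null {u : α → ℝ} {s C : ℝ} (hμ : μ ≠ 0)
    (hlb : ∀ᵐ x ∂μ, -C ≤ u x) (h : μ {x | s < u x} = 0) : essSup u μ ≤ s := by
  have hne : (MeasureTheory.ae μ).NeBot := MeasureTheory.ae_neBot.2 hμ
  rw [essSup_eq_sInf]
  refine csInf_le ⟨-C, fun a ha => ?_⟩ h
  by_contra hlt
  push_neg at hlt
  have h1 : ∀ᵐ x ∂μ, u x ≤ a := by
    rw [MeasureTheory.ae_iff]; simpa [not_le] using ha
  obtain ⟨x, hx1, hx2⟩ := (h1.and hlb).exists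
  exact absurd (hx2.trans hx1) (not_le.2 hlt)

lemma le_essInf_of_null {u : α → ℝ} {s C : ℝ} (hμ : μ ≠ 0)
    (hub : ∀ᵐ x ∂μ, u x ≤ C) (h : μ {x | u x ≤ s} = 0) : s ≤ essInf u μ := by
  have hne : (MeasureTheory.ae μ).NeBot := MeasureTheory.ae_neBot.2 hμ
  rw [essInf_eq_sSup]
  refine le_csSup ⟨C, fun a ha => ?_⟩ ?_
  · by_contra hlt
    push_neg at hlt
    have h1 : ∀ᵐ x ∂μ, a ≤ u x := by
      rw [MeasureTheory.ae_iff]; simpa [not_le] using ha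
    obtain ⟨x, hx1, hx2⟩ := (h1.and hub).exists
    exact absurd (hx1.trans hx2) (not_le.2 hlt)
  · exact measure_mono_null (fun x (hx : u x < s) => hx.le) h

end Aux

/-- For any measurable `A ⊆ ℝ^d` and measurable `u` essentially bounded on `A`,
`osc_A(u) = ∫ s, osc_A(χ_{u>s}) ds`. -/
theorem stmt0 {d : ℕ} (A : Set (EuclideanSpace ℝ (Fin d))) (hA : MeasurableSet A)
    (u : EuclideanSpace ℝ (Fin d) → ℝ) (hu : Measurable u)
    (hbd : ∃ C : ℝ, ∀ᵐ x ∂(volume.restrict A), |u x| ≤ C) :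
    osc A u = ∫ s : ℝ, osc A (fun x => if u x > s then (1 : ℝ) else 0) := by
  classical
  set μ := (volume.restrict A : MeasureTheory.Measure (EuclideanSpace ℝ (Fin d))) with hμdef
  by_cases hμ : μ = 0
  · -- zero measure case: everything is 0
    have hosc : ∀ v : EuclideanSpace ℝ (Fin d) → ℝ, osc A v = 0 := by
      intro v
      unfold osc
      rw [← hμdef, hμ, essSup_zero_measure, essInf_zero_measure, sub_zero]
    rw [hosc]
    simp only [hosc, integral_zero]
  · obtain ⟨C, hC⟩ := hbd
    have hub : ∀ᵐ x ∂μ, u x ≤ C := hC.mono fun x hx => (abs_le.1 hx).2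
    have hlb : ∀ᵐ x ∂μ, -C ≤ u x := hC.mono fun x hx => (abs_le.1 hx).1
    have hbddA : IsBoundedUnder (· ≤ ·) (MeasureTheory.ae μ) u := ⟨C, by simpa using hub⟩
    have hbddB : IsBoundedUnder (· ≥ ·) (MeasureTheory.ae μ) u := ⟨-C, by simpa using hlb⟩
    have hne : (MeasureTheory.ae μ).NeBot := MeasureTheory.ae_neBot.2 hμ
    set M := essSup u μ with hM
    set m := essInf u μ with hm
    have hMu : ∀ᵐ x ∂μ, u x ≤ M := ae_le_essSup hbddA
    have hmu : ∀ᵐ x ∂μ, m ≤ u x := ae_essInf_le hbddB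
    have hmM : m ≤ M := by
      obtain ⟨x, h1, h2⟩ := (hmu.and hMu).exists
      exact h1.trans h2
    -- positive measure of superlevel sets below M
    have hS : ∀ s : ℝ, s < M → μ {x | s < u x} ≠ 0 := by
      intro s hs h0
      exact absurd (essSup_le_of_null hμ hlb h0) (not_le.2 hs)
    have hI : ∀ s : ℝ, m < s → μ {x | u x ≤ s} ≠ 0 := by
      intro s hs h0
      exact absurd (le_essInf_of_null hμ hub h0) (not_le.2 hs)
    have hS' : ∀ s : ℝ, M < s → μ {x | s < u x} = 0 := by
      intro s hs
      refine measure_mono_null (fun x hx => ?_) (meas_essSup_lt hbddA)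
      simp only [Set.mem_setOf_eq] at *
      exact hs.trans hx
    have hI' : ∀ s : ℝ, s < m → μ {x | u x ≤ s} = 0 := by
      intro s hs
      refine measure_mono_null (fun x hx => ?_) (meas_lt_essInf hbddB)
      simp only [Set.mem_setOf_eq] at *
      exact lt_of_le_of_lt hx hs
    -- identify the integrand a.e. with the indicator of Ioo m M
    have hae : (fun s : ℝ => osc A (fun x => if u x > s then (1 : ℝ) else 0)) =ᵐ[volume]
        (Set.Ioo m M).indicator (fun _ => (1 : ℝ)) := by
      have hnull : (volume : MeasureTheory.Measure ℝ) {m, M} = 0 :=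
        (Set.toFinite ({m, M} : Set ℝ)).measure_zero _
      filter_upwards [MeasureTheory.measure_eq_zero_iff_ae_notMem.1 hnull] with s hs
      simp only [Set.mem_insert_iff, Set.mem_singleton_iff, not_or] at hs
      obtain ⟨hsm, hsM⟩ := hs
      set v : EuclideanSpace ℝ (Fin d) → ℝ := fun x => if u x > s then (1 : ℝ) else 0 with hv
      have hv01 : ∀ x, v x ≤ 1 := by intro x; by_cases h : u x > s <;> simp [hv, h]
      have hv0 : ∀ x, 0 ≤ v x := by intro x; by_cases h : u x > s <;> simp [hv, h]
      have hv1set : {x | v x = 1} = {x | s < u x} := by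
        ext x; by_cases h : u x > s <;> simp [hv, h]
      have hv0set : {x | v x = 0} = {x | u x ≤ s} := by
        ext x
        simp only [hv, Set.mem_setOf_eq]
        by_cases h : u x > s
        · simp [h, not_le.2 h]
        · simp [h, le_of_not_gt h]
      rcases lt_trichotomy s m with h1 | h1 | h1
      · -- s < m : v = 1 a.e.
        have hone : v =ᵐ[μ] fun _ => (1 : ℝ) := by
          have := hI' s h1
          rw [← hv0set] at this
          have h2 : ∀ᵐ x ∂μ, v x ≠ 0 := by
            rw [MeasureTheory.ae_iff]; simpa using this
          filter_upwards [h2] with x hx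
          rcases (hv0 x).lt_or_eq with h3 | h3
          · by_cases h4 : u x > s
            · simp [hv, h4]
            · exfalso; apply hx; simp [hv, h4]
          · exact absurd h3.symm hx
        have : osc A v = 0 := by
          unfold osc
          rw [← hμdef, essSup_congr_ae hone, essInf_congr_ae hone,
            essSup_const _ hμ, essInf_const _ hμ, sub_self]
        rw [this, Set.indicator_of_notMem (fun hmem => absurd h1 (not_lt.2 hmem.1.le))]
      · exact absurd h1 hsm
      · rcases lt_trichotomy s M with h2 | h2 | h2
        · -- m < s < M
          have hsup : essSup v μ = 1 := by
            apply essSup_eq_one hv01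
            rw [hv1set]; exact hS s h2
          have hinf : essInf v μ = 0 := by
            apply essInf_eq_zero hv0
            rw [hv0set]; exact hI s h1
          have : osc A v = 1 := by
            unfold osc
            rw [← hμdef, hsup, hinf, sub_zero]
          rw [this, Set.indicator_of_mem (Set.mem_Ioo.2 ⟨h1, h2⟩)]
        · exact absurd h2 hsM
        · -- s > M : v = 0 a.e.
          have hzero : v =ᵐ[μ] fun _ => (0 : ℝ) := by
            have := hS' s h2
            rw [← hv1set] at this
            have h3 : ∀ᵐ x ∂μ, v x ≠ 1 := by
              rw [MeasureTheory.ae_iff]; simpa using this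
            filter_upwards [h3] with x hx
            by_cases h4 : u x > s
            · exfalso; apply hx; simp [hv, h4]
            · simp [hv, h4]
          have : osc A v = 0 := by
            unfold osc
            rw [← hμdef, essSup_congr_ae hzero, essInf_congr_ae hzero,
              essSup_const _ hμ, essInf_const _ hμ, sub_self]
          rw [this, Set.indicator_of_notMem (fun hmem => absurd h2 (not_lt.2 hmem.2.le))]
    rw [MeasureTheory.integral_congr_ae hae]
    rw [MeasureTheory.integral_indicator_const (1 : ℝ) measurableSet_Ioo]
    rw [Real.volume_real_Ioo_of_le hmM]
    unfold osc
    rw [← hμdef, ← hM, ← hm]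
    simp
end

section
/- For any two measurable sets A, B ⊆ ℝ^d, the energy E_ρ is submodular: E_ρ(A ∪ B) + E_ρ(A ∩ B) ≤ E_ρ(A) + E_ρ(B). -/
open MeasureTheory Metric Set Filter
open scoped ENNReal

/-- `E_ρ(E) = (1/(2ρ)) ∫ osc_{B(x,ρ)}(χ_E) dx`, with values in `[0,∞]`. -/
noncomputable def ErhoSet {d : ℕ} (ρ : ℝ) (E : Set (EuclideanSpace ℝ (Fin d))) : ℝ≥0∞ :=
  (ENNReal.ofReal (2 * ρ))⁻¹ * ∫⁻ x, ENNReal.ofReal (osc (ball x ρ) (E.indicator 1))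

section aux

variable {α : Type*} [MeasurableSpace α] {μ : Measure α} {E : Set α}

lemma ind_le_one (E : Set α) (y : α) : E.indicator (1 : α → ℝ) y ≤ 1 := by
  by_cases hy : y ∈ E
  · rw [Set.indicator_of_mem hy]; norm_num
  · rw [Set.indicator_of_notMem hy]; norm_num

lemma ind_nonneg (E : Set α) (y : α) : 0 ≤ E.indicator (1 : α → ℝ) y := by
  by_cases hy : y ∈ E
  · rw [Set.indicator_of_mem hy]; norm_num
  · rw [Set.indicator_of_notMem hy]

lemma essSup_ind_one (h : μ E ≠ 0) :
    essSup (E.indicator (1 : α → ℝ)) μ = 1 := by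
  haveI : (ae μ).NeBot := ae_neBot.mpr fun h0 => h (by simp [h0])
  apply le_antisymm
  · exact limsup_le_of_le (isCoboundedUnder_le_of_le _ (ind_nonneg E))
      (Eventually.of_forall (ind_le_one E))
  · apply le_limsup_of_frequently_le _ (isBoundedUnder_of ⟨1, ind_le_one E⟩)
    rw [frequently_ae_iff]
    refine fun h0 => h (measure_mono_null (fun y hy => ?_) h0)
    simp only [Set.mem_setOf_eq, Set.indicator_of_mem hy, Pi.one_apply, le_refl]

lemma essSup_ind_zero (h : μ E = 0) (hμ : μ ≠ 0) :
    essSup (E.indicator (1 : α → ℝ)) μ = 0 := by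
  haveI : (ae μ).NeBot := ae_neBot.mpr hμ
  have : essSup (E.indicator (1 : α → ℝ)) μ = essSup (fun _ => (0:ℝ)) μ := by
    apply essSup_congr_ae
    filter_upwards [measure_eq_zero_iff_ae_notMem.mp h] with y hy
    rw [Set.indicator_of_notMem hy]
  rw [this, essSup_const _ hμ]

lemma essInf_ind_zero (h : μ Eᶜ ≠ 0) :
    essInf (E.indicator (1 : α → ℝ)) μ = 0 := by
  haveI : (ae μ).NeBot := ae_neBot.mpr fun h0 => h (by simp [h0])
  apply le_antisymm
  · apply liminf_le_of_frequently_le _ (isBoundedUnder_of ⟨0, ind_nonneg E⟩)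
    rw [frequently_ae_iff]
    refine fun h0 => h (measure_mono_null (fun y hy => ?_) h0)
    simp only [Set.mem_setOf_eq, Set.indicator_of_notMem hy, le_refl]
  · exact le_liminf_of_le (isCoboundedUnder_ge_of_le _ (ind_le_one E))
      (Eventually.of_forall (ind_nonneg E))

lemma essInf_ind_one (h : μ Eᶜ = 0) (hμ : μ ≠ 0) :
    essInf (E.indicator (1 : α → ℝ)) μ = 1 := by
  haveI : (ae μ).NeBot := ae_neBot.mpr hμ
  have : essInf (E.indicator (1 : α → ℝ)) μ = essInf (fun _ => (1:ℝ)) μ := by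
    apply essInf_congr_ae
    filter_upwards [measure_eq_zero_iff_ae_notMem.mp h] with y hy
    rw [Set.indicator_of_mem (not_not.mp hy), Pi.one_apply]
  rw [this, essInf_const _ hμ]

end aux

section main

variable {d : ℕ}

lemma osc_ind (ρ : ℝ) (hρ : 0 < ρ) (E : Set (EuclideanSpace ℝ (Fin d)))
    (hE : MeasurableSet E) (x : EuclideanSpace ℝ (Fin d)) :
    osc (ball x ρ) (E.indicator 1) =
      if 0 < volume (ball x ρ ∩ E) ∧ 0 < volume (ball x ρ \ E) then 1 else 0 := by
  set μ := volume.restrict (ball x ρ) with hμdef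
  have hball : 0 < volume (ball x ρ) := measure_ball_pos volume x hρ
  have hμ : μ ≠ 0 := by
    rw [hμdef, Ne, Measure.restrict_eq_zero]
    exact hball.ne'
  have hμE : μ E = volume (ball x ρ ∩ E) := by
    rw [hμdef, Measure.restrict_apply hE, Set.inter_comm]
  have hμEc : μ Eᶜ = volume (ball x ρ \ E) := by
    rw [hμdef, Measure.restrict_apply hE.compl, Set.inter_comm, Set.diff_eq]
  have hsum : μ E ≠ 0 ∨ μ Eᶜ ≠ 0 := by
    by_contra hc
    push_neg at hc
    have : volume (ball x ρ) = 0 := by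
      have : ball x ρ ⊆ (ball x ρ ∩ E) ∪ (ball x ρ \ E) := by
        rw [Set.inter_union_diff]
      refine measure_mono_null this (measure_union_null ?_ ?_)
      · rw [← hμE]; exact hc.1
      · rw [← hμEc]; exact hc.2
    exact hball.ne' this
  rw [osc, ← hμdef]
  rcases eq_or_ne (μ E) 0 with hp | hp
  · have hq : μ Eᶜ ≠ 0 := hsum.resolve_left (fun h => h hp)
    rw [essSup_ind_zero hp hμ, essInf_ind_zero hq]
    rw [if_neg]
    · ring
    · rw [← hμE]
      simp [hp]
  · rcases eq_or_ne (μ Eᶜ) 0 with hq | hq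
    · rw [essSup_ind_one hp, essInf_ind_one hq hμ]
      rw [if_neg]
      · ring
      · rw [← hμEc]
        simp [hq]
    · rw [essSup_ind_one hp, essInf_ind_zero hq, if_pos]
      · ring
      · constructor
        · rw [← hμE]; exact pos_iff_ne_zero.mpr hp
        · rw [← hμEc]; exact pos_iff_ne_zero.mpr hq

lemma meas_vol_ball_inter (ρ : ℝ) (E : Set (EuclideanSpace ℝ (Fin d)))
    (hE : MeasurableSet E) :
    Measurable fun x => volume (ball x ρ ∩ E) := by
  have hs : MeasurableSet {p : EuclideanSpace ℝ (Fin d) × EuclideanSpace ℝ (Fin d) |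
      dist p.2 p.1 < ρ ∧ p.2 ∈ E} := by
    apply MeasurableSet.inter
    · exact measurableSet_lt (measurable_dist.comp (measurable_snd.prodMk measurable_fst))
        measurable_const
    · exact measurable_snd hE
  have hm := measurable_measure_prodMk_left (ν := (volume : Measure (EuclideanSpace ℝ (Fin d)))) hs
  have heq : (fun x => volume (ball x ρ ∩ E)) = fun x =>
      volume (Prod.mk x ⁻¹' {p : EuclideanSpace ℝ (Fin d) × EuclideanSpace ℝ (Fin d) |
        dist p.2 p.1 < ρ ∧ p.2 ∈ E}) := by
    rfl
  rw [heq]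
  exact hm

/-- The "mixed" set. -/
def Smix (ρ : ℝ) (E : Set (EuclideanSpace ℝ (Fin d))) : Set (EuclideanSpace ℝ (Fin d)) :=
  {x | 0 < volume (ball x ρ ∩ E) ∧ 0 < volume (ball x ρ \ E)}

lemma Smix_measurable (ρ : ℝ) (E : Set (EuclideanSpace ℝ (Fin d)))
    (hE : MeasurableSet E) : MeasurableSet (Smix ρ E) := by
  have h1 := meas_vol_ball_inter ρ E hE
  have h2 := meas_vol_ball_inter ρ Eᶜ hE.compl
  have : Smix ρ E = (fun x => volume (ball x ρ ∩ E)) ⁻¹' (Set.Ioi 0) ∩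
      (fun x => volume (ball x ρ ∩ Eᶜ)) ⁻¹' (Set.Ioi 0) := by
    ext y
    simp [Smix, Set.diff_eq]
  rw [this]
  exact (h1 measurableSet_Ioi).inter (h2 measurableSet_Ioi)

lemma ErhoSet_eq (ρ : ℝ) (hρ : 0 < ρ) (E : Set (EuclideanSpace ℝ (Fin d)))
    (hE : MeasurableSet E) :
    ErhoSet ρ E = (ENNReal.ofReal (2 * ρ))⁻¹ * volume (Smix ρ E) := by
  rw [ErhoSet]
  congr 1
  have : ∀ x, ENNReal.ofReal (osc (ball x ρ) (E.indicator 1)) =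
      (Smix ρ E).indicator (fun _ => (1 : ℝ≥0∞)) x := by
    intro x
    rw [osc_ind ρ hρ E hE x]
    by_cases hx : 0 < volume (ball x ρ ∩ E) ∧ 0 < volume (ball x ρ \ E)
    · rw [if_pos hx, Set.indicator_of_mem (show x ∈ Smix ρ E from hx)]
      simp
    · rw [if_neg hx, Set.indicator_of_notMem (show x ∉ Smix ρ E from hx)]
      simp
  rw [lintegral_congr this, lintegral_indicator (Smix_measurable ρ E hE)]
  simp

end main


/-- Submodularity: `E_ρ(A ∪ B) + E_ρ(A ∩ B) ≤ E_ρ(A) + E_ρ(B)`. -/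
theorem stmt3 {d : ℕ} (ρ : ℝ) (hρ : 0 < ρ)
    (A B : Set (EuclideanSpace ℝ (Fin d)))
    (hA : MeasurableSet A) (hB : MeasurableSet B) :
    ErhoSet ρ (A ∪ B) + ErhoSet ρ (A ∩ B) ≤ ErhoSet ρ A + ErhoSet ρ B := by
  rw [ErhoSet_eq ρ hρ _ (hA.union hB), ErhoSet_eq ρ hρ _ (hA.inter hB),
    ErhoSet_eq ρ hρ A hA, ErhoSet_eq ρ hρ B hB, ← mul_add, ← mul_add]
  apply mul_le_mul_right
  -- key combinatorial inequality
  have hsub1 : Smix ρ (A ∪ B) ∪ Smix ρ (A ∩ B) ⊆ Smix ρ A ∪ Smix ρ B := by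
    intro x hx
    by_contra hnot
    rw [Set.mem_union] at hnot
    push_neg at hnot
    obtain ⟨hxA, hxB⟩ := hnot
    simp only [Smix, Set.mem_setOf_eq, not_and_or, not_lt, le_zero_iff] at hxA hxB
    have key : x ∉ Smix ρ (A ∪ B) ∧ x ∉ Smix ρ (A ∩ B) := by
      constructor <;> simp only [Smix, Set.mem_setOf_eq, not_and_or, not_lt, le_zero_iff]
      · -- union not mixed
        rcases hxA with hpA | hqA
        · rcases hxB with hpB | hqB
          · left
            refine measure_mono_null ?_ (measure_union_null hpA hpB)
            rw [Set.inter_union_distrib_left]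
          · right
            exact measure_mono_null (Set.diff_subset_diff_right Set.subset_union_right) hqB
        · right
          exact measure_mono_null (Set.diff_subset_diff_right Set.subset_union_left) hqA
      · -- intersection not mixed
        rcases hxA with hpA | hqA
        · left
          exact measure_mono_null (Set.inter_subset_inter_right _ Set.inter_subset_left) hpA
        · rcases hxB with hpB | hqB
          · left
            exact measure_mono_null (Set.inter_subset_inter_right _ Set.inter_subset_right) hpB
          · right
            refine measure_mono_null ?_ (measure_union_null hqA hqB)
            intro y hy
            rcases hy with ⟨hyb, hyn⟩
            by_cases hyA : y ∈ A
            · right; exact ⟨hyb, fun hB' => hyn ⟨hyA, hB'⟩⟩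
            · left; exact ⟨hyb, hyA⟩
    rcases hx with hx | hx
    · exact key.1 hx
    · exact key.2 hx
  have hsub2 : Smix ρ (A ∪ B) ∩ Smix ρ (A ∩ B) ⊆ Smix ρ A ∩ Smix ρ B := by
    rintro x ⟨⟨hpU, hqU⟩, ⟨hpI, hqI⟩⟩
    refine ⟨⟨?_, ?_⟩, ?_, ?_⟩
    · exact lt_of_lt_of_le hpI
        (measure_mono (Set.inter_subset_inter_right _ Set.inter_subset_left))
    · exact lt_of_lt_of_le hqU
        (measure_mono (Set.diff_subset_diff_right Set.subset_union_left))
    · exact lt_of_lt_of_le hpI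
        (measure_mono (Set.inter_subset_inter_right _ Set.inter_subset_right))
    · exact lt_of_lt_of_le hqU
        (measure_mono (Set.diff_subset_diff_right Set.subset_union_right))
  calc volume (Smix ρ (A ∪ B)) + volume (Smix ρ (A ∩ B))
      = volume (Smix ρ (A ∪ B) ∪ Smix ρ (A ∩ B)) + volume (Smix ρ (A ∪ B) ∩ Smix ρ (A ∩ B)) :=
        (measure_union_add_inter _ (Smix_measurable ρ (A ∩ B) (hA.inter hB))).symm
    _ ≤ volume (Smix ρ A ∪ Smix ρ B) + volume (Smix ρ A ∩ Smix ρ B) :=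
        add_le_add (measure_mono hsub1) (measure_mono hsub2)
    _ = volume (Smix ρ A) + volume (Smix ρ B) :=
        measure_union_add_inter _ (Smix_measurable ρ B hB)
end

section
/- For any measurable set E ⊆ ℝ^d, E_ρ(E) ≤ M_ρ(E'), for every representative E' of E (i.e., |E △ E'| = 0), where M_ρ(E') = (1/(2ρ)) |{x : dist(x,E') ≤ ρ and dist(x, ℝ^d \ E') ≤ ρ}|. -/
open MeasureTheory Metric Set Filter
open scoped ENNReal

/-- `M_ρ(E') = (1/(2ρ)) |{x : dist(x,E') ≤ ρ ∧ dist(x, (E')ᶜ) ≤ ρ}|`, where `dist(x,∅) = +∞`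
(we use the extended distance `infEdist`). -/
noncomputable def Mrho {d : ℕ} (ρ : ℝ) (E' : Set (EuclideanSpace ℝ (Fin d))) : ℝ≥0∞ :=
  (ENNReal.ofReal (2 * ρ))⁻¹ *
    volume {x : EuclideanSpace ℝ (Fin d) |
      EMetric.infEdist x E' ≤ ENNReal.ofReal ρ ∧ EMetric.infEdist x E'ᶜ ≤ ENNReal.ofReal ρ}

/-- `E_ρ(E) ≤ M_ρ(E')` for every representative `E'` of `E` (i.e. `|E △ E'| = 0`). -/
theorem stmt7 {d : ℕ} (ρ : ℝ) (hρ : 0 < ρ)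
    (E E' : Set (EuclideanSpace ℝ (Fin d))) (hE : MeasurableSet E)
    (hEE' : volume ((E \ E') ∪ (E' \ E)) = 0) :
    ErhoSet ρ E ≤ Mrho ρ E' := by
  set S : Set (EuclideanSpace ℝ (Fin d)) :=
    {x | EMetric.infEdist x E' ≤ ENNReal.ofReal ρ ∧ EMetric.infEdist x E'ᶜ ≤ ENNReal.ofReal ρ}
    with hSdef
  have hS : MeasurableSet S := by
    have h1 : MeasurableSet {x : EuclideanSpace ℝ (Fin d) |
        EMetric.infEdist x E' ≤ ENNReal.ofReal ρ} :=
      measurableSet_le EMetric.continuous_infEdist.measurable measurable_const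
    have h2 : MeasurableSet {x : EuclideanSpace ℝ (Fin d) |
        EMetric.infEdist x E'ᶜ ≤ ENNReal.ofReal ρ} :=
      measurableSet_le EMetric.continuous_infEdist.measurable measurable_const
    exact h1.inter h2
  have hE1 : volume (E \ E') = 0 := measure_mono_null Set.subset_union_left hEE'
  have hE2 : volume (E' \ E) = 0 := measure_mono_null Set.subset_union_right hEE'
  have key : ∀ x : EuclideanSpace ℝ (Fin d),
      ENNReal.ofReal (osc (ball x ρ) (E.indicator 1)) ≤
        S.indicator (fun _ => (1 : ℝ≥0∞)) x := by
    intro x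
    have hne : volume.restrict (ball x ρ) ≠ 0 := by
      rw [Ne, Measure.restrict_eq_zero]
      exact (measure_ball_pos volume x hρ).ne'
    haveI : (ae (volume.restrict (ball x ρ))).NeBot := ae_neBot.mpr hne
    have hub : ∀ y, E.indicator (1 : EuclideanSpace ℝ (Fin d) → ℝ) y ≤ 1 := by
      intro y; by_cases h : y ∈ E <;> simp [Set.indicator, h]
    have hlb : ∀ y, 0 ≤ E.indicator (1 : EuclideanSpace ℝ (Fin d) → ℝ) y := by
      intro y; by_cases h : y ∈ E <;> simp [Set.indicator, h]
    by_cases hxS : x ∈ S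
    · -- bound osc by 1
      have hsup : essSup (E.indicator (1 : EuclideanSpace ℝ (Fin d) → ℝ))
          (volume.restrict (ball x ρ)) ≤ 1 :=
        limsup_le_of_le (isCoboundedUnder_le_of_le _ hlb) (Eventually.of_forall hub)
      have hinf : (0 : ℝ) ≤ essInf (E.indicator (1 : EuclideanSpace ℝ (Fin d) → ℝ))
          (volume.restrict (ball x ρ)) :=
        le_liminf_of_le (isCoboundedUnder_ge_of_le _ hub) (Eventually.of_forall hlb)
      have hosc1 : osc (ball x ρ) (E.indicator 1) ≤ 1 := by
        unfold osc; linarith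
      calc ENNReal.ofReal (osc (ball x ρ) (E.indicator 1)) ≤ ENNReal.ofReal 1 :=
            ENNReal.ofReal_le_ofReal hosc1
        _ = 1 := by simp
        _ = S.indicator (fun _ => (1 : ℝ≥0∞)) x := by rw [Set.indicator_of_mem hxS]
    · -- osc is zero
      have hball : ∀ᵐ y ∂(volume.restrict (ball x ρ)), y ∈ ball x ρ :=
        ae_restrict_mem measurableSet_ball
      have hd1 : ∀ᵐ y ∂(volume.restrict (ball x ρ)), y ∉ E \ E' := by
        have h : volume.restrict (ball x ρ) (E \ E') = 0 :=
          le_antisymm (le_trans (Measure.restrict_le_self _) hE1.le) zero_le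
        exact measure_eq_zero_iff_ae_notMem.mp h
      have hd2 : ∀ᵐ y ∂(volume.restrict (ball x ρ)), y ∉ E' \ E := by
        have h : volume.restrict (ball x ρ) (E' \ E) = 0 :=
          le_antisymm (le_trans (Measure.restrict_le_self _) hE2.le) zero_le
        exact measure_eq_zero_iff_ae_notMem.mp h
      have hedist : ∀ y, y ∈ ball x ρ → edist x y ≤ ENNReal.ofReal ρ := by
        intro y hy
        rw [edist_dist]
        exact ENNReal.ofReal_le_ofReal (by rw [dist_comm]; exact (mem_ball.mp hy).le)
      rw [hSdef, Set.mem_setOf_eq, not_and_or] at hxS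
      have hosc : osc (ball x ρ) (E.indicator 1) = 0 := by
        rcases hxS with hx1 | hx1
        · -- ball ∩ E' = ∅, indicator ae 0
          have hae : E.indicator (1 : EuclideanSpace ℝ (Fin d) → ℝ)
              =ᵐ[volume.restrict (ball x ρ)] (fun _ => (0 : ℝ)) := by
            filter_upwards [hball, hd1] with y hyb hy1
            by_cases hyE : y ∈ E
            · exfalso
              have hyE' : y ∈ E' := by
                by_contra h; exact hy1 ⟨hyE, h⟩
              exact hx1 (le_trans (EMetric.infEdist_le_edist_of_mem hyE') (hedist y hyb))
            · simp [Set.indicator, hyE]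
          unfold osc
          rw [essSup_congr_ae hae, essInf_congr_ae hae, essSup_const _ hne,
            essInf_const _ hne, sub_self]
        · -- ball ⊆ E', indicator ae 1
          have hae : E.indicator (1 : EuclideanSpace ℝ (Fin d) → ℝ)
              =ᵐ[volume.restrict (ball x ρ)] (fun _ => (1 : ℝ)) := by
            filter_upwards [hball, hd2] with y hyb hy2
            have hyE' : y ∈ E' := by
              by_contra h
              exact hx1 (le_trans (EMetric.infEdist_le_edist_of_mem h) (hedist y hyb))
            have hyE : y ∈ E := by
              by_contra h; exact hy2 ⟨hyE', h⟩
            simp [Set.indicator, hyE]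
          unfold osc
          rw [essSup_congr_ae hae, essInf_congr_ae hae, essSup_const _ hne,
            essInf_const _ hne, sub_self]
      rw [hosc]
      simp
  unfold ErhoSet Mrho
  refine mul_le_mul_right ?_ _
  calc ∫⁻ x, ENNReal.ofReal (osc (ball x ρ) (E.indicator 1))
      ≤ ∫⁻ x, S.indicator (fun _ => (1 : ℝ≥0∞)) x := lintegral_mono key
    _ = volume S := by
        rw [lintegral_indicator hS]
        simp
end

section
/- Let E ⊆ E' be measurable sets and let h > 0. If F minimizes F ↦ E^f(F) + (1/h)∫_F d_E dx and F' minimizes F ↦ E^f(F) + (1/h)∫_F d_{E'} dx, then F ∩ F' is also a minimizer of the first problem and F ∪ F' is also a minimizer of the second problem, provided E^f is submodular (E^f(A∪B) + E^f(A∩B) ≤ E^f(A) + E^f(B)) and d_E ≥ d_{E'} pointwise a.e. -/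
open MeasureTheory Set

/-- If `F` minimizes `G ↦ E^f(G) + (1/h)∫_G d_E` and `F'` minimizes
`G ↦ E^f(G) + (1/h)∫_G d_{E'}`, where `E^f` is submodular and `d_E ≥ d_{E'}` a.e.,
then `F ∩ F'` is a minimizer of the first problem and `F ∪ F'` of the second. -/
theorem stmt11 {d : ℕ} (h : ℝ) (hh : 0 < h)
    (Ef : Set (EuclideanSpace ℝ (Fin d)) → ℝ)
    (hsubmod : ∀ A B : Set (EuclideanSpace ℝ (Fin d)),
      MeasurableSet A → MeasurableSet B → Ef (A ∪ B) + Ef (A ∩ B) ≤ Ef A + Ef B)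
    (dE dE' : EuclideanSpace ℝ (Fin d) → ℝ)
    (hord : ∀ᵐ x : EuclideanSpace ℝ (Fin d), dE' x ≤ dE x)
    (F F' : Set (EuclideanSpace ℝ (Fin d)))
    (hF : MeasurableSet F) (hF' : MeasurableSet F')
    (hIntE : IntegrableOn dE F) (hIntE' : IntegrableOn dE' F')
    (hIntE2 : IntegrableOn dE F') (hIntE2' : IntegrableOn dE' F)
    (hminF : ∀ G : Set (EuclideanSpace ℝ (Fin d)), MeasurableSet G → IntegrableOn dE G →
      Ef F + (1 / h) * ∫ x in F, dE x ≤ Ef G + (1 / h) * ∫ x in G, dE x)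
    (hminF' : ∀ G : Set (EuclideanSpace ℝ (Fin d)), MeasurableSet G → IntegrableOn dE' G →
      Ef F' + (1 / h) * ∫ x in F', dE' x ≤ Ef G + (1 / h) * ∫ x in G, dE' x) :
    (∀ G : Set (EuclideanSpace ℝ (Fin d)), MeasurableSet G → IntegrableOn dE G →
      Ef (F ∩ F') + (1 / h) * ∫ x in F ∩ F', dE x ≤ Ef G + (1 / h) * ∫ x in G, dE x) ∧
    (∀ G : Set (EuclideanSpace ℝ (Fin d)), MeasurableSet G → IntegrableOn dE' G →
      Ef (F ∪ F') + (1 / h) * ∫ x in F ∪ F', dE' x ≤ Ef G + (1 / h) * ∫ x in G, dE' x) := by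
  set c : ℝ := 1 / h with hc
  have hcpos : 0 < c := by positivity
  -- splitting of integrals
  have hsplit1 : (∫ x in F ∩ F', dE x) + ∫ x in F \ F', dE x = ∫ x in F, dE x :=
    integral_inter_add_diff hF' hIntE
  have hIntUnion : IntegrableOn dE' (F ∪ F') := hIntE2'.union hIntE'
  have hsplit2 : (∫ x in (F ∪ F') ∩ F', dE' x) + ∫ x in (F ∪ F') \ F', dE' x
      = ∫ x in F ∪ F', dE' x := integral_inter_add_diff hF' hIntUnion
  have hset1 : (F ∪ F') ∩ F' = F' := by simp
  have hset2 : (F ∪ F') \ F' = F \ F' := union_diff_right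
  rw [hset1, hset2] at hsplit2
  -- monotonicity on F \ F'
  have hmono : ∫ x in F \ F', dE' x ≤ ∫ x in F \ F', dE x :=
    setIntegral_mono_ae (hIntE2'.mono_set diff_subset) (hIntE.mono_set diff_subset)
      hord
  -- minimality applied to intersection and union
  have g1 : Ef F + c * ∫ x in F, dE x ≤ Ef (F ∩ F') + c * ∫ x in F ∩ F', dE x :=
    hminF (F ∩ F') (hF.inter hF') (hIntE.mono_set inter_subset_left)
  have g2 : Ef F' + c * ∫ x in F', dE' x ≤ Ef (F ∪ F') + c * ∫ x in F ∪ F', dE' x :=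
    hminF' (F ∪ F') (hF.union hF') hIntUnion
  have hsub := hsubmod F F' hF hF'
  have hprod : 0 ≤ c * ((∫ x in F \ F', dE x) - ∫ x in F \ F', dE' x) :=
    mul_nonneg hcpos.le (by linarith)
  -- deduce both gaps vanish
  have key1 : Ef (F ∩ F') + c * ∫ x in F ∩ F', dE x ≤ Ef F + c * ∫ x in F, dE x := by
    nlinarith [g1, g2, hsub, hprod]
  have key2 : Ef (F ∪ F') + c * ∫ x in F ∪ F', dE' x ≤ Ef F' + c * ∫ x in F', dE' x := by
    nlinarith [g1, g2, hsub, hprod]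
  constructor
  · intro G hG hIG
    exact key1.trans (hminF G hG hIG)
  · intro G hG hIG
    exact key2.trans (hminF' G hG hIG)
end

section
/- Let φ : ℝ^d → ℝ be C² with Dφ(x) ≠ 0 at a point x, let K = {y : φ(y) ≥ φ(x)}, p̂ = Dφ(x)/|Dφ(x)|. Suppose y_n ∈ ℝ^d, y_n → x, y_n ≠ x, φ(y_n) ≥ φ(x), and |x − s p̂ − y_n| < s for a fixed s > 0 and all n. If moreover the unit vectors ξ_n = (y_n − x)/|y_n − x| converge to some ξ, then ξ ⊥ Dφ(x) and (s/|Dφ(x)|) (D²φ(x) ξ) · ξ ≥ 1. -/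
open Set Filter Topology Asymptotics
open scoped RealInnerProductSpace

variable {E : Type*} [NormedAddCommGroup E] [NormedSpace ℝ E]

lemma quad_taylor {f : E → ℝ} (hf : ContDiff ℝ 2 f) (x : E) :
    (fun v => f (x + v) - f x - fderiv ℝ f x v
        - (1/2) * fderiv ℝ (fderiv ℝ f) x v v) =o[𝓝 0] fun v => ‖v‖ ^ 2 := by
  set f' := fderiv ℝ f with hf'def
  set B := fderiv ℝ f' x with hBdef
  have hder : ∀ y, HasFDerivAt f (f' y) y := fun y =>
    ((hf.differentiable (by norm_num)).differentiableAt).hasFDerivAt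
  have hf'cd : ContDiff ℝ 1 f' := hf.fderiv_right (le_refl 2)
  have hB : HasFDerivAt f' B x :=
    ((hf'cd.differentiable (by norm_num)).differentiableAt).hasFDerivAt
  have hsymm : ∀ v w, B v w = B w v := second_derivative_symmetric hder hB
  set g : E → ℝ := fun v => f (x + v) - f x - f' x v - (1/2) * B v v with hgdef
  set D : E → E →L[ℝ] ℝ := fun u => f' (x + u) - f' x - B u with hDdef
  have hgd : ∀ u, HasFDerivAt g (D u) u := by
    intro u
    have h1 : HasFDerivAt (fun v : E => x + v) (ContinuousLinearMap.id ℝ E) u :=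
      (hasFDerivAt_id u).const_add x
    have h2 : HasFDerivAt (fun v : E => f (x + v)) (f' (x + u)) u := by
      exact (hder (x + u)).comp u h1
    have hbb : IsBoundedBilinearMap ℝ fun p : E × E => B p.1 p.2 :=
      B.isBoundedBilinearMap
    have h4' : HasFDerivAt (fun v : E => B v v)
        ((B u).comp (ContinuousLinearMap.id ℝ E) + B.flip u) u :=
      (B.hasFDerivAt).clm_apply (hasFDerivAt_id u)
    have h5 := h4'.const_mul (1/2 : ℝ)
    have h6 := ((h2.sub_const (f x)).sub ((f' x).hasFDerivAt)).sub h5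
    refine h6.congr_fderiv ?_
    ext w
    simp only [hDdef, ContinuousLinearMap.sub_apply, ContinuousLinearMap.coe_sub',
      Pi.sub_apply, ContinuousLinearMap.smul_apply, ContinuousLinearMap.comp_apply,
      ContinuousLinearMap.id_apply, ContinuousLinearMap.add_apply,
      ContinuousLinearMap.flip_apply, smul_eq_mul]
    have := hsymm u w
    ring_nf
    linarith
  have hlo : (fun u => f' (x + u) - f' x - B u) =o[𝓝 0] fun u => u := by
    simpa using (hasFDerivAt_iff_isLittleO_nhds_zero.1 hB)
  rw [isLittleO_iff]
  intro c hc
  have h7 := isLittleO_iff.1 hlo hc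
  rcases Metric.eventually_nhds_iff.1 h7 with ⟨δ, hδ, hball⟩
  have key : ∀ v : E, ‖v‖ < δ → ‖g v - g 0‖ ≤ c * ‖v‖ ^ 2 := by
    intro v hv
    have key : ‖g v - g 0‖ ≤ (c * ‖v‖) * ‖v - 0‖ := by
      apply Convex.norm_image_sub_le_of_norm_hasFDerivWithin_le
        (f' := D) (s := Metric.closedBall (0 : E) ‖v‖)
        (fun u _ => (hgd u).hasFDerivWithinAt) ?_
        (convex_closedBall _ _)
        (Metric.mem_closedBall_self (norm_nonneg v))
        (by simp [Metric.mem_closedBall])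
      intro u hu
      have hu' : ‖u‖ ≤ ‖v‖ := by simpa using hu
      have h8 := hball (show dist u 0 < δ by simpa using lt_of_le_of_lt hu' hv)
      calc ‖D u‖ ≤ c * ‖u‖ := by simpa using h8
        _ ≤ c * ‖v‖ := by nlinarith [hc.le]
    calc ‖g v - g 0‖ ≤ (c * ‖v‖) * ‖v - 0‖ := key
      _ = c * ‖v‖ ^ 2 := by rw [sub_zero]; ring
  have hg0 : g 0 = 0 := by simp [hgdef]
  filter_upwards [Metric.eventually_nhds_iff.2
    ⟨δ, hδ, fun {v} hv => key v (by simpa using hv)⟩] with v hv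
  calc ‖f (x + v) - f x - f' x v - (1/2) * B v v‖ = ‖g v - g 0‖ := by rw [hg0, sub_zero]
    _ ≤ c * ‖v‖ ^ 2 := hv
    _ = c * ‖‖v‖ ^ 2‖ := by rw [Real.norm_of_nonneg (by positivity)]

set_option maxHeartbeats 1000000 in
/-- The key second-order estimate: if `φ` is `C²` with `Dφ(x) ≠ 0`, `y_n → x`, `y_n ≠ x`,
`φ(y_n) ≥ φ(x)`, `|x - s p̂ - y_n| < s` with `p̂ = Dφ(x)/|Dφ(x)|`, and the unit vectors
`ξ_n = (y_n - x)/|y_n - x|` converge to `ξ`, then `ξ ⊥ Dφ(x)` and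
`(s/|Dφ(x)|)(D²φ(x) ξ)·ξ ≥ 1`. -/
theorem stmt19 {d : ℕ} (φ : EuclideanSpace ℝ (Fin d) → ℝ) (hφ : ContDiff ℝ 2 φ)
    (x : EuclideanSpace ℝ (Fin d)) (hgrad : gradient φ x ≠ 0)
    (s : ℝ) (hs : 0 < s)
    (y : ℕ → EuclideanSpace ℝ (Fin d))
    (hyx : ∀ n, y n ≠ x) (hylev : ∀ n, φ x ≤ φ (y n))
    (hyball : ∀ n, dist (x - s • (‖gradient φ x‖⁻¹ • gradient φ x)) (y n) < s)
    (hyconv : Tendsto y atTop (𝓝 x))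
    (ξ : ℕ → EuclideanSpace ℝ (Fin d))
    (hξdef : ∀ n, ξ n = ‖y n - x‖⁻¹ • (y n - x))
    (xiLim : EuclideanSpace ℝ (Fin d)) (hξconv : Tendsto ξ atTop (𝓝 xiLim)) :
    ⟪xiLim, gradient φ x⟫ = 0 ∧
      1 ≤ s / ‖gradient φ x‖ * (iteratedFDeriv ℝ 2 φ x ![xiLim, xiLim]) := by
  set g : EuclideanSpace ℝ (Fin d) := gradient φ x with hgdef
  set G : ℝ := ‖g‖ with hGdef
  have hG : 0 < G := norm_pos_iff.2 hgrad
  set B := fderiv ℝ (fderiv ℝ φ) x with hBdef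
  set v : ℕ → EuclideanSpace ℝ (Fin d) := fun n => y n - x with hvdef
  set r : ℕ → ℝ := fun n => ‖v n‖ with hrdef
  have hr : ∀ n, 0 < r n := fun n => norm_pos_iff.2 (sub_ne_zero.2 (hyx n))
  -- gradient vs fderiv
  have hinner : ∀ w : EuclideanSpace ℝ (Fin d), fderiv ℝ φ x w = ⟪g, w⟫ := by
    intro w
    rw [hgdef, gradient, InnerProductSpace.toDual_symm_apply]
  -- ball inequality
  have hball : ∀ n, ⟪v n, g⟫ < -(G * r n ^ 2 / (2 * s)) := by
    intro n
    have h1 : ‖v n + s • (G⁻¹ • g)‖ < s := by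
      have := hyball n
      rw [dist_eq_norm] at this
      have heq : x - s • (G⁻¹ • g) - y n = -(v n + s • (G⁻¹ • g)) := by
        simp [hvdef]; abel
      rwa [heq, norm_neg] at this
    have h2 : ‖v n + s • (G⁻¹ • g)‖ ^ 2 < s ^ 2 := by
      have := pow_lt_pow_left₀ h1 (norm_nonneg _) two_ne_zero
      simpa using this
    rw [norm_add_sq_real] at h2
    have hnp : ‖s • (G⁻¹ • g)‖ = s := by
      rw [norm_smul, norm_smul, norm_inv, norm_norm, Real.norm_of_nonneg hs.le]
      field_simp
    have hip : ⟪v n, s • (G⁻¹ • g)⟫ = s * G⁻¹ * ⟪v n, g⟫ := by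
      rw [real_inner_smul_right, real_inner_smul_right]; ring
    rw [hnp, hip] at h2
    have h3 : 2 * (s * G⁻¹ * ⟪v n, g⟫) < -(r n ^ 2) := by
      have : r n ^ 2 = ‖v n‖ ^ 2 := rfl
      nlinarith [h2]
    have h4 : s * G⁻¹ * ⟪v n, g⟫ < -(r n ^ 2) / 2 := by linarith
    have h5 : ⟪v n, g⟫ = (G / s) * (s * G⁻¹ * ⟪v n, g⟫) := by field_simp
    have hGs : (0:ℝ) < G / s := by positivity
    calc ⟪v n, g⟫ = (G / s) * (s * G⁻¹ * ⟪v n, g⟫) := h5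
      _ < (G / s) * (-(r n ^ 2) / 2) := mul_lt_mul_of_pos_left h4 hGs
      _ = -(G * r n ^ 2 / (2 * s)) := by
          field_simp
  -- Taylor expansion error
  have hquad := quad_taylor hφ x
  have hv0 : Tendsto v atTop (𝓝 0) := by
    have := hyconv.sub_const x
    simpa [hvdef] using this
  have hcomp := hquad.comp_tendsto hv0
  set e : ℕ → ℝ := fun n =>
    (φ (x + v n) - φ x - fderiv ℝ φ x (v n) - (1/2) * B (v n) (v n)) / r n ^ 2 with hedef
  have he : Tendsto e atTop (𝓝 0) := by
    have := hcomp.tendsto_div_nhds_zero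
    simpa [hedef, hrdef] using this
  have hyeq : ∀ n, x + v n = y n := fun n => by simp [hvdef]
  -- ξ relation
  have hvξ : ∀ n, v n = r n • ξ n := by
    intro n
    rw [hξdef n]
    rw [smul_smul]
    rw [show r n * ‖y n - x‖⁻¹ = 1 by
      have h := (hr n).ne'
      simp only [hrdef, hvdef] at h ⊢
      field_simp]
    simp [hvdef]
  have hBv : ∀ n, B (v n) (v n) = r n ^ 2 * B (ξ n) (ξ n) := by
    intro n
    rw [hvξ n]
    simp [map_smul]
    ring
  have hgv : ∀ n, ⟪g, v n⟫ = r n * ⟪g, ξ n⟫ := by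
    intro n
    rw [hvξ n, real_inner_smul_right]
  -- key inequality per n
  have hkey : ∀ n, 0 ≤ r n * ⟪g, ξ n⟫ + r n ^ 2 * ((1/2) * B (ξ n) (ξ n) + e n) := by
    intro n
    have h0 : 0 ≤ φ (x + v n) - φ x := by rw [hyeq n]; linarith [hylev n]
    have h1 : φ (x + v n) - φ x
        = fderiv ℝ φ x (v n) + (1/2) * B (v n) (v n) + e n * r n ^ 2 := by
      rw [hedef, div_mul_cancel₀ _ (pow_ne_zero 2 (hr n).ne')]
      ring
    rw [h1, hinner, hgv, hBv] at h0
    linarith [h0]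
  -- continuity facts
  have hQ : Tendsto (fun n => B (ξ n) (ξ n)) atTop (𝓝 (B xiLim xiLim)) := by
    have hc : Continuous fun p : EuclideanSpace ℝ (Fin d) × EuclideanSpace ℝ (Fin d) => B p.1 p.2 :=
      B.continuous₂
    exact (hc.tendsto (xiLim, xiLim)).comp (hξconv.prodMk_nhds hξconv)
  have hr0 : Tendsto r atTop (𝓝 0) := by
    simpa [hrdef] using hv0.norm
  have hgξ : Tendsto (fun n => ⟪g, ξ n⟫) atTop (𝓝 ⟪g, xiLim⟫) :=
    (tendsto_const_nhds : Tendsto (fun _ : ℕ => g) atTop (𝓝 g)).inner hξconv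
  -- first conclusion
  have hA : ∀ n, 0 ≤ ⟪g, ξ n⟫ + r n * ((1/2) * B (ξ n) (ξ n) + e n) := by
    intro n
    have := hkey n
    have hrn := hr n
    nlinarith [this]
  have hge : 0 ≤ ⟪g, xiLim⟫ := by
    have hlim : Tendsto (fun n => ⟪g, ξ n⟫ + r n * ((1/2) * B (ξ n) (ξ n) + e n)) atTop
        (𝓝 (⟪g, xiLim⟫ + 0 * ((1/2) * B xiLim xiLim + 0))) :=
      hgξ.add (hr0.mul (((tendsto_const_nhds).mul hQ).add he))
    have := ge_of_tendsto' hlim hA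
    simpa using ge_of_tendsto hlim (Eventually.of_forall hA)
  have hle : ⟪g, xiLim⟫ ≤ 0 := by
    apply le_of_tendsto hgξ
    filter_upwards with n
    have h1 := hball n
    have h2 : ⟪g, v n⟫ < 0 := by
      rw [real_inner_comm]
      have : 0 < G * r n ^ 2 / (2 * s) :=
        div_pos (mul_pos hG (pow_pos (hr n) 2)) (by linarith)
      linarith
    rw [hgv n] at h2
    nlinarith [hr n]
  have hzero : ⟪g, xiLim⟫ = 0 := le_antisymm hle hge
  refine ⟨by rw [real_inner_comm]; exact hzero, ?_⟩
  -- second conclusion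
  have hBkey : ∀ n, G / (2 * s) ≤ (1/2) * B (ξ n) (ξ n) + e n := by
    intro n
    have h0 := hkey n
    have hrn := hr n
    have h2 : r n * ⟪g, ξ n⟫ < -(G * r n ^ 2 / (2 * s)) := by
      rw [← hgv n, real_inner_comm]
      exact hball n
    have h3 : 0 ≤ -(G * r n ^ 2 / (2 * s)) + r n ^ 2 * ((1/2) * B (ξ n) (ξ n) + e n) := by
      nlinarith [h0]
    have h4 : G * r n ^ 2 / (2 * s) ≤ r n ^ 2 * ((1/2) * B (ξ n) (ξ n) + e n) := by linarith
    rw [div_le_iff₀ (by positivity : (0:ℝ) < 2 * s)] at h4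
    rw [div_le_iff₀ (by positivity : (0:ℝ) < 2 * s)]
    have h5 : r n ^ 2 * G ≤ r n ^ 2 * (((1/2) * B (ξ n) (ξ n) + e n) * (2 * s)) := by
      nlinarith [h4]
    exact le_of_mul_le_mul_left h5 (pow_pos hrn 2)
  have hlim2 : Tendsto (fun n => (1/2) * B (ξ n) (ξ n) + e n) atTop
      (𝓝 ((1/2) * B xiLim xiLim + 0)) :=
    ((tendsto_const_nhds).mul hQ).add he
  have hfin : G / (2 * s) ≤ (1/2) * B xiLim xiLim + 0 :=
    ge_of_tendsto hlim2 (Eventually.of_forall hBkey)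
  rw [iteratedFDeriv_two_apply]
  simp only [Matrix.cons_val_zero, Matrix.cons_val_one, Matrix.head_cons]
  have hX : G / s ≤ B xiLim xiLim := by
    rw [div_le_iff₀ (by positivity : (0:ℝ) < 2 * s)] at hfin
    rw [div_le_iff₀ hs]
    nlinarith [hfin]
  calc (1:ℝ) = s / G * (G / s) := by field_simp
    _ ≤ s / G * B xiLim xiLim := by
        apply mul_le_mul_of_nonneg_left hX (by positivity)
end
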